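/- arXiv:1012.3267 — 2 statements merged into one kernel-verified Lean document; each statement's English description precedes it below -/
import Mathlib

section
/- Let N ≥ 2, let φ be an A_N-positive primitive automorphism of the free group F_N, let w ∈ F_N, k ≥ 1, and set ψ_0 = i_w ∘ φ^k. Suppose the fixed subgroup of ψ_0 has rank at least 2, i.e. there exist x, y ∈ F_N with ψ_0(x) = x, ψ_0(y) = y and x·y ≠ y·x. Then there exist z ∈ F_N and a nontrivial u ∈ F_N such that u is ψ-reduced for the automorphism ψ = i_z ∘ ψ_0 ∘ i_{z^{-1}} (in particular ψ is in the isogredience class of ψ_0). (Unnumbered Lemma of Section 2.2.4 of the paper.) -/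
/-- A word of the free group is pure positive if its reduced word is nonempty
and all its letters are positive. -/
def PurePos {N : ℕ} (v : FreeGroup (Fin N)) : Prop :=
  v.toWord ≠ [] ∧ ∀ l ∈ v.toWord, l.2 = true

/-- A word of the free group is pure negative if its reduced word is nonempty
and all its letters are negative. -/
def PureNeg {N : ℕ} (v : FreeGroup (Fin N)) : Prop :=
  v.toWord ≠ [] ∧ ∀ l ∈ v.toWord, l.2 = false

/-- An automorphism of the free group is `A_N`-positive if the image of each
generator is pure positive. -/
def IsPositive {N : ℕ} (φ : MulAut (FreeGroup (Fin N))) : Prop :=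
  ∀ a : Fin N, PurePos (φ (FreeGroup.of a))

/-- An `A_N`-positive automorphism is primitive if some power sends each generator
to a word containing every positive letter. -/
def IsPrimitive {N : ℕ} (φ : MulAut (FreeGroup (Fin N))) : Prop :=
  ∃ k : ℕ, 1 ≤ k ∧ ∀ a b : Fin N, (b, true) ∈ ((φ ^ k) (FreeGroup.of a)).toWord

/-- `x * y` is cancellation-free: the reduced word of the product is the
concatenation of the reduced words. -/
def NoCancel {N : ℕ} (x y : FreeGroup (Fin N)) : Prop :=
  (x * y).toWord = x.toWord ++ y.toWord

/-- `x` is a prefix of `v`: `v = x * y` without cancellation. -/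
def IsPrefixOf {N : ℕ} (x v : FreeGroup (Fin N)) : Prop :=
  ∃ y, v = x * y ∧ NoCancel x y

/-- `x` is a suffix of `v`: `v = y * x` without cancellation. -/
def IsSuffixOf {N : ℕ} (x v : FreeGroup (Fin N)) : Prop :=
  ∃ y, v = y * x ∧ NoCancel y x

/-- `u` is `ψ`-reduced: `u` is nontrivial and fixed by `ψ`, cyclically reduced,
its first and last letters have opposite signs, and no nonempty strict prefix
or suffix of `u` is fixed by `ψ`. -/
def PsiReduced {N : ℕ} (ψ : FreeGroup (Fin N) → FreeGroup (Fin N))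
    (u : FreeGroup (Fin N)) : Prop :=
  u ≠ 1 ∧ ψ u = u ∧
  (∀ f l : Fin N × Bool, u.toWord.head? = some f → u.toWord.getLast? = some l →
    l ≠ (f.1, !f.2) ∧ l.2 = !f.2) ∧
  (∀ x, x ≠ 1 → x ≠ u → IsPrefixOf x u → ψ x ≠ x) ∧
  (∀ x, x ≠ 1 → x ≠ u → IsSuffixOf x u → ψ x ≠ x)

/-!
Among all nontrivial elements fixed by some `ψ_z = i_z ∘ ψ₀ ∘ i_{z⁻¹}`, take a shortest one `u`.
Minimality makes `u` cyclically reduced and forbids fixed proper prefixes and suffixes (the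
complementary factor would be a shorter fixed element); it also survives cyclic rotation, which
conjugates `u` and only changes `z`. A fixed element satisfies `φ^k(u) ~ u`. If `u` were positive,
then for a suitable power `θ = φ^(kk')` every generator image has length `≥ 2`, so `θ` at least
doubles the length of the positive word `u ^ m`, while conjugation adds only a bounded amount:
impossible for large `m`. The same applies to `u⁻¹`, so `u` has letters of both signs and some
rotation of `u` starts and ends with letters of opposite signs; that rotation is `ψ_z`-reduced.
-/

section FixedConj

variable {G : Type*} [Group G] (f : G →* G)

/-- `u` is fixed by `i_z ∘ f ∘ i_{z⁻¹}` for some `z`. -/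
def HasFixedConj (u : G) : Prop :=
  ∃ z, f (z * u * z⁻¹) = z * u * z⁻¹

variable {f}

theorem HasFixedConj.conj {u : G} (hu : HasFixedConj f u) (c : G) :
    HasFixedConj f (c⁻¹ * u * c) := by
  obtain ⟨z, hz⟩ := hu
  exact ⟨z * c, by simpa only [mul_inv_rev, inv_inv, mul_assoc, mul_inv_cancel_left] using hz⟩

theorem HasFixedConj.inv {u : G} (hu : HasFixedConj f u) : HasFixedConj f u⁻¹ := by
  obtain ⟨z, hz⟩ := hu
  refine ⟨z, ?_⟩
  rw [show z * u⁻¹ * z⁻¹ = (z * u * z⁻¹)⁻¹ by group, map_inv, hz]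

theorem HasFixedConj.isConj {g : G →* G} {w u : G} (hf : ∀ x, f x = w⁻¹ * g x * w)
    (hu : HasFixedConj f u) : IsConj (g u) u := by
  obtain ⟨z, hz⟩ := hu
  rw [hf, map_mul, map_mul, map_inv] at hz
  refine isConj_iff.2 ⟨z⁻¹ * w⁻¹ * g z, ?_⟩
  calc z⁻¹ * w⁻¹ * g z * g u * (z⁻¹ * w⁻¹ * g z)⁻¹
      = z⁻¹ * (w⁻¹ * (g z * g u * (g z)⁻¹) * w) * z := by group
    _ = u := by rw [hz]; group

end FixedConj

theorem List.exists_append_cons_cons_snd_eq_not {β : Type*} {L : List (β × Bool)}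
    (hpos : ¬ ∀ l ∈ L, l.2 = true) (hneg : ¬ ∀ l ∈ L, l.2 = false) :
    ∃ L₁ L₂ a b, L = L₁ ++ a :: b :: L₂ ∧ b.2 = !a.2 := by
  by_contra! h
  have hchain : IsChain (· = ·) (L.map Prod.snd) := by
    refine (isChain_map Prod.snd).2 (isChain_iff_forall_rel_of_append_cons_cons.2 ?_)
    intro a b L₁ L₂ hL
    have := h L₁ L₂ a b hL
    revert this; cases a.2 <;> cases b.2 <;> simp
  rcases L with _ | ⟨l, L⟩
  · simp at hpos
  have hall : ∀ x ∈ l :: L, x.2 = l.2 := by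
    have := isChain_eq_iff_eq_replicate.1 hchain l.2 (by simp)
    intro x hx
    exact eq_of_mem_replicate (this ▸ mem_map_of_mem hx)
  cases hl : l.2
  · exact hneg fun x hx => (hall x hx).trans hl
  · exact hpos fun x hx => (hall x hx).trans hl

namespace FreeGroup

theorem map_mk_of_forall_snd {α G F : Type*} [Group G] [FunLike F (FreeGroup α) G]
    [MonoidHomClass F (FreeGroup α) G] (θ : F) {L : List (α × Bool)}
    (hL : ∀ l ∈ L, l.2 = true) : θ (mk L) = (L.map fun l => θ (of l.1)).prod := by
  induction L with
  | nil => exact _root_.map_one θ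
  | cons l L ih =>
    obtain ⟨a, b⟩ := l
    obtain rfl : b = true := hL _ List.mem_cons_self
    rw [← List.singleton_append, ← mul_mk, _root_.map_mul,
      ih fun l hl => hL l (List.mem_cons_of_mem _ hl)]
    rfl

variable {α : Type*} [DecidableEq α]

theorem norm_conj_le (c x : FreeGroup α) : (c * x * c⁻¹).norm ≤ x.norm + 2 * c.norm := by
  have h₁ := norm_mul_le (c * x) c⁻¹
  have h₂ := norm_mul_le c x
  rw [norm_inv_eq] at h₁
  omega

theorem toWord_mk_of_norm_eq {L : List (α × Bool)} (h : (mk L).norm = L.length) :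
    (mk L).toWord = L := by
  unfold norm at h
  rw [toWord_mk] at h ⊢
  exact reduce.red.sublist.eq_of_length h

section Shortest

variable (f : FreeGroup α →* FreeGroup α)

def IsShortestFixedConj (u : FreeGroup α) : Prop :=
  u ≠ 1 ∧ HasFixedConj f u ∧ ∀ v, v ≠ 1 → HasFixedConj f v → u.norm ≤ v.norm

theorem exists_isShortestFixedConj {x : FreeGroup α} (hx : x ≠ 1) (hfx : f x = x) :
    ∃ u, IsShortestFixedConj f u := by
  classical
  have hex : ∃ n, ∃ u : FreeGroup α, u ≠ 1 ∧ HasFixedConj f u ∧ u.norm = n :=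
    ⟨_, x, hx, ⟨1, by simpa using hfx⟩, rfl⟩
  obtain ⟨u, hu, hfu, hun⟩ := Nat.find_spec hex
  exact ⟨u, hu, hfu, fun v hv hfv => hun ▸ Nat.find_min' hex ⟨v, hv, hfv, rfl⟩⟩

variable {f} {u : FreeGroup α}

theorem IsShortestFixedConj.le_norm (hu : IsShortestFixedConj f u) {v : FreeGroup α}
    (hv : v ≠ 1) (hfv : HasFixedConj f v) : u.norm ≤ v.norm :=
  hu.2.2 v hv hfv

theorem IsShortestFixedConj.isCyclicallyReduced (hu : IsShortestFixedConj f u) :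
    IsCyclicallyReduced u.toWord := by
  refine ⟨isReduced_toWord, fun a ha b hb hab => ?_⟩
  by_contra hsign
  obtain ⟨M, hM⟩ : ∃ M, u.toWord = [b] ++ M ++ [a] := by
    rcases h : u.toWord with _ | ⟨b', M'⟩
    · simp [h] at hb
    rw [h, List.head?_cons, Option.mem_some_iff] at hb
    subst hb
    rcases M'.eq_nil_or_concat with rfl | ⟨M, a', rfl⟩
    · simp_all
    · rw [h, List.concat_eq_append, ← List.cons_append, List.getLast?_concat,
        Option.mem_some_iff] at ha
      exact ⟨M, by rw [List.concat_eq_append, ha]; rfl⟩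
  have hinv : (mk [b])⁻¹ = mk [a] := by
    rw [inv_mk]
    simp only [invRev, List.map_cons, List.map_nil, List.reverse_singleton]
    congr 2
    ext
    · exact hab.symm
    · revert hsign; cases a.2 <;> cases b.2 <;> simp
  have hu_eq : u = mk [b] * mk M * (mk [b])⁻¹ := by
    rw [hinv, mul_mk, mul_mk, ← hM, mk_toWord]
  have hconj : mk M = (mk [b])⁻¹ * u * mk [b] := by
    rw [hu_eq]; group
  have hM1 : mk M ≠ 1 := by
    intro h
    exact hu.1 (by rw [hu_eq, h]; group)
  have hle : u.norm ≤ (mk M).norm := hu.le_norm hM1 (hconj ▸ hu.2.1.conj _)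
  have hlen : u.norm = M.length + 2 := by
    unfold norm; rw [hM]; simp
  have := norm_mk_le (L₁ := M)
  omega

theorem IsShortestFixedConj.not_fixed_of_eq_mul (hu : IsShortestFixedConj f u)
    {z x y : FreeGroup α} (hz : f (z * u * z⁻¹) = z * u * z⁻¹) (hxy : u = x * y)
    (hlen : u.norm = x.norm + y.norm) (hx : x ≠ 1) (hy : y ≠ 1) :
    f (z * x * z⁻¹) ≠ z * x * z⁻¹ ∧ f (z * y * z⁻¹) ≠ z * y * z⁻¹ := by
  have hxn : x.norm ≠ 0 := mt norm_eq_zero.1 hx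
  have hyn : y.norm ≠ 0 := mt norm_eq_zero.1 hy
  constructor
  · intro hfx
    have hfy : HasFixedConj f y := ⟨z, by
      rw [show z * y * z⁻¹ = (z * x * z⁻¹)⁻¹ * (z * u * z⁻¹) by rw [hxy]; group,
        _root_.map_mul, _root_.map_inv, hfx, hz]⟩
    have := hu.le_norm hy hfy
    omega
  · intro hfy
    have hfx : HasFixedConj f x := ⟨z, by
      rw [show z * x * z⁻¹ = (z * u * z⁻¹) * (z * y * z⁻¹)⁻¹ by rw [hxy]; group,
        _root_.map_mul, _root_.map_inv, hfy, hz]⟩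
    have := hu.le_norm hx hfx
    omega

theorem IsShortestFixedConj.rotate (hu : IsShortestFixedConj f u) {L₁ L₂ : List (α × Bool)}
    (h : u.toWord = L₁ ++ L₂) :
    IsShortestFixedConj f (mk (L₂ ++ L₁)) ∧ (mk (L₂ ++ L₁)).toWord = L₂ ++ L₁ := by
  have hconj : mk (L₂ ++ L₁) = (mk L₁)⁻¹ * u * mk L₁ := by
    rw [← mk_toWord (x := u), h, ← mul_mk, ← mul_mk]; group
  have hne : mk (L₂ ++ L₁) ≠ 1 := by
    intro h1
    apply hu.1
    calc u = mk L₁ * ((mk L₁)⁻¹ * u * mk L₁) * (mk L₁)⁻¹ := by group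
      _ = 1 := by rw [← hconj, h1]; group
  have hfix : HasFixedConj f (mk (L₂ ++ L₁)) := hconj ▸ hu.2.1.conj (mk L₁)
  have hu_len : u.norm = (L₂ ++ L₁).length := by
    unfold norm; rw [h, List.length_append, List.length_append, Nat.add_comm]
  have hnorm : (mk (L₂ ++ L₁)).norm = (L₂ ++ L₁).length :=
    le_antisymm norm_mk_le (hu_len ▸ hu.le_norm hne hfix)
  exact ⟨⟨hne, hfix, fun v hv hfv => hnorm ▸ hu_len ▸ hu.le_norm hv hfv⟩,
    toWord_mk_of_norm_eq hnorm⟩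

end Shortest

end FreeGroup

section Positive

open FreeGroup

variable {N : ℕ}

theorem purePos_of (a : Fin N) : PurePos (of a) := by
  simp [PurePos, toWord_of]

theorem PurePos.one_le_norm {v : FreeGroup (Fin N)} (hv : PurePos v) : 1 ≤ v.norm :=
  List.length_pos_of_ne_nil hv.1

theorem PureNeg.purePos_inv {v : FreeGroup (Fin N)} (hv : PureNeg v) : PurePos v⁻¹ := by
  refine ⟨by simpa [toWord_inv, invRev] using hv.1, ?_⟩
  simp only [toWord_inv, invRev, List.mem_reverse, List.mem_map]
  rintro _ ⟨l, hl, rfl⟩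
  simp [hv.2 l hl]

theorem NoCancel.norm_mul {x y : FreeGroup (Fin N)} (h : NoCancel x y) :
    (x * y).norm = x.norm + y.norm := by
  unfold FreeGroup.norm; rw [h, List.length_append]

section Words

variable {x y : FreeGroup (Fin N)}

theorem PurePos.noCancel (hx : PurePos x) (hy : PurePos y) : NoCancel x y := by
  rw [NoCancel, toWord_mul, IsReduced.reduce_eq]
  refine isReduced_toWord.append isReduced_toWord fun a ha b hb _ => ?_
  rw [hx.2 a (List.mem_of_mem_getLast? ha), hy.2 b (List.mem_of_mem_head? hb)]

theorem PurePos.mul (hx : PurePos x) (hy : PurePos y) : PurePos (x * y) := by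
  rw [PurePos, hx.noCancel hy]
  exact ⟨by simp [hx.1], fun l hl => (List.mem_append.1 hl).elim (hx.2 l) (hy.2 l)⟩

theorem PurePos.list_prod {xs : List (FreeGroup (Fin N))} (hx : PurePos x)
    (hxs : ∀ y ∈ xs, PurePos y) :
    PurePos (x :: xs).prod ∧ (x :: xs).prod.norm = ((x :: xs).map FreeGroup.norm).sum := by
  induction xs generalizing x with
  | nil => simpa using hx
  | cons y ys ih =>
    obtain ⟨hp, hn⟩ :=
      ih (hxs y List.mem_cons_self) fun z hz => hxs z (List.mem_cons_of_mem _ hz)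
    rw [List.prod_cons, List.map_cons, List.sum_cons, ← hn]
    exact ⟨hx.mul hp, (hx.noCancel hp).norm_mul⟩

theorem PurePos.pow (hx : PurePos x) {m : ℕ} (hm : m ≠ 0) :
    PurePos (x ^ m) ∧ (x ^ m).norm = m * x.norm := by
  obtain ⟨j, rfl⟩ := Nat.exists_eq_succ_of_ne_zero hm
  rw [← List.prod_replicate, List.replicate_succ]
  obtain ⟨hp, hn⟩ := hx.list_prod fun y hy => List.eq_of_mem_replicate hy ▸ hx
  refine ⟨hp, hn.trans ?_⟩
  simp [List.map_replicate, List.sum_replicate]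
  ring

theorem PurePos.map {θ : MulAut (FreeGroup (Fin N))} (hθ : IsPositive θ) {c : ℕ}
    (hc : ∀ a, c ≤ (θ (of a)).norm) (hx : PurePos x) :
    PurePos (θ x) ∧ c * x.norm ≤ (θ x).norm := by
  obtain ⟨l, L, hL⟩ := List.exists_cons_of_ne_nil hx.1
  have hθx : θ x = ((l :: L).map fun l => θ (of l.1)).prod := by
    conv_lhs => rw [← mk_toWord (x := x)]
    rw [map_mk_of_forall_snd θ hx.2, hL]
  rw [List.map_cons] at hθx
  obtain ⟨hp, hn⟩ := (hθ l.1).list_prod (xs := L.map fun l => θ (of l.1))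
    (by simp only [List.mem_map]; rintro _ ⟨l, -, rfl⟩; exact hθ _)
  rw [hθx, hn]
  refine ⟨hp, ?_⟩
  have := List.card_nsmul_le_sum ((θ (of l.1) :: L.map fun l => θ (of l.1)).map FreeGroup.norm) c
    (by simp [hc])
  simpa [FreeGroup.norm, hL, mul_comm] using this

end Words

theorem PurePos.not_isConj_map {θ : MulAut (FreeGroup (Fin N))} (hθ : IsPositive θ)
    (h2 : ∀ a, 2 ≤ (θ (of a)).norm) {u : FreeGroup (Fin N)} (hu : PurePos u) :
    ¬ IsConj (θ u) u := by
  intro h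
  obtain ⟨c, hc⟩ := isConj_iff.1 h.symm
  -- `θ` doubles the length of `u ^ m`, conjugation by `c` adds at most `2 ‖c‖`
  set m := 2 * c.norm + 1
  obtain ⟨hum, hnorm⟩ := hu.pow (m := m) (by omega)
  have hgrow := (hum.map hθ h2).2
  rw [map_pow, ← hc, conj_pow] at hgrow
  have := norm_conj_le c (u ^ m)
  have := Nat.le_mul_of_pos_right m hu.one_le_norm
  omega

variable {φ : MulAut (FreeGroup (Fin N))}

theorem IsPositive.pow (hφ : IsPositive φ) (m : ℕ) : IsPositive (φ ^ m) := by
  induction m with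
  | zero => exact purePos_of
  | succ m ih =>
    intro a
    rw [pow_succ, MulAut.mul_apply]
    exact ((hφ a).map ih (c := 0) fun _ => Nat.zero_le _).1

theorem IsPrimitive.exists_two_le_norm (hN : 2 ≤ N) (hpos : IsPositive φ)
    (hprim : IsPrimitive φ) : ∃ k, ∀ m, k ≤ m → ∀ a, 2 ≤ ((φ ^ m) (of a)).norm := by
  obtain ⟨k, -, hmem⟩ := hprim
  refine ⟨k, fun m hm a => ?_⟩
  have h2 : 2 ≤ ((φ ^ k) (of a)).norm := by
    have hsub : {((⟨0, by omega⟩ : Fin N), true), (⟨1, by omega⟩, true)} ⊆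
        ((φ ^ k) (of a)).toWord.toFinset := by
      simp [Finset.insert_subset_iff, hmem]
    have := (Finset.card_le_card hsub).trans (List.toFinset_card_le _)
    rwa [Finset.card_pair (by simp)] at this
  obtain ⟨j, rfl⟩ := Nat.exists_eq_add_of_le hm
  rw [add_comm, pow_add, MulAut.mul_apply]
  have := ((hpos.pow k a).map (hpos.pow j) fun b => (hpos.pow j b).one_le_norm).2
  omega

theorem IsPrimitive.not_isConj_pow_apply (hN : 2 ≤ N) (hpos : IsPositive φ)
    (hprim : IsPrimitive φ) {k : ℕ} (hk : 1 ≤ k) {u : FreeGroup (Fin N)} (hu : PurePos u) :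
    ¬ IsConj ((φ ^ k) u) u := by
  intro h
  have hiter : ∀ m, IsConj ((φ ^ (k * m)) u) u := by
    intro m
    induction m with
    | zero => exact IsConj.refl u
    | succ m ih =>
      rw [Nat.mul_succ, pow_add, MulAut.mul_apply]
      exact ((φ ^ (k * m)).toMonoidHom.map_isConj h).trans ih
  obtain ⟨k', h2⟩ := hprim.exists_two_le_norm hN hpos
  exact hu.not_isConj_map (hpos.pow _) (h2 _ (Nat.le_mul_of_pos_left k' hk)) (hiter k')

end Positive

theorem FreeGroup.IsShortestFixedConj.psiReduced {N : ℕ}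
    {f : FreeGroup (Fin N) →* FreeGroup (Fin N)} {u z : FreeGroup (Fin N)}
    (hu : IsShortestFixedConj f u) (hz : f (z * u * z⁻¹) = z * u * z⁻¹)
    (hsign : ∀ a b, u.toWord.head? = some a → u.toWord.getLast? = some b → b.2 = !a.2) :
    PsiReduced (fun x => z⁻¹ * f (z * x * z⁻¹) * z) u := by
  have twist (x) : z⁻¹ * f (z * x * z⁻¹) * z = x ↔ f (z * x * z⁻¹) = z * x * z⁻¹ := by
    refine ⟨fun h => ?_, fun h => by rw [h]; group⟩
    calc f (z * x * z⁻¹) = z * (z⁻¹ * f (z * x * z⁻¹) * z) * z⁻¹ := by group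
      _ = z * x * z⁻¹ := by rw [h]
  refine ⟨hu.1, (twist u).2 hz, fun a b ha hb => ⟨fun hba => ?_, hsign a b ha hb⟩, ?_, ?_⟩
  · have := hu.isCyclicallyReduced.2 b hb a ha (by rw [hba])
    rw [hba] at this
    simp at this
  · rintro x hx hxu ⟨y, rfl, hnc⟩ hfix
    have hy : y ≠ 1 := by rintro rfl; exact hxu (mul_one x).symm
    exact (hu.not_fixed_of_eq_mul hz rfl hnc.norm_mul hx hy).1 ((twist x).1 hfix)
  · rintro x hx hxu ⟨y, rfl, hnc⟩ hfix
    have hy : y ≠ 1 := by rintro rfl; exact hxu (one_mul x).symm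
    exact (hu.not_fixed_of_eq_mul hz rfl hnc.norm_mul hy hx).2 ((twist x).1 hfix)

/-- If the fixed subgroup of `ψ₀ = i_w ∘ φ^k` has rank at least `2` (it contains two
non-commuting elements), then some automorphism `ψ = i_z ∘ ψ₀ ∘ i_{z⁻¹}` in the
isogredience class of `ψ₀` admits a nontrivial `ψ`-reduced word. -/
theorem exists_psiReduced {N : ℕ} (hN : 2 ≤ N)
    (φ : MulAut (FreeGroup (Fin N))) (hpos : IsPositive φ) (hprim : IsPrimitive φ)
    (w : FreeGroup (Fin N)) (k : ℕ) (hk : 1 ≤ k)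
    (ψ₀ : FreeGroup (Fin N) → FreeGroup (Fin N))
    (hψ₀ : ψ₀ = fun x => w⁻¹ * (φ ^ k) x * w)
    (hrank : ∃ x y : FreeGroup (Fin N), ψ₀ x = x ∧ ψ₀ y = y ∧ x * y ≠ y * x) :
    ∃ (z u : FreeGroup (Fin N)), u ≠ 1 ∧
      PsiReduced (fun x => z⁻¹ * ψ₀ (z * x * z⁻¹) * z) u := by
  let f : FreeGroup (Fin N) →* FreeGroup (Fin N) :=
    MonoidHom.mk' ψ₀ fun x y => by simp only [hψ₀, map_mul]; group
  have hf : ∀ x, f x = w⁻¹ * (φ ^ k).toMonoidHom x * w := by simp [f, hψ₀]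
  have hnotPos : ∀ v, HasFixedConj f v → ¬ PurePos v := fun v hv hp =>
    hprim.not_isConj_pow_apply hN hpos hk hp (hv.isConj hf)
  obtain ⟨x, y, hx, -, hxy⟩ := hrank
  have hx1 : x ≠ 1 := by rintro rfl; simp at hxy
  obtain ⟨u, hu⟩ := FreeGroup.exists_isShortestFixedConj f hx1 hx
  have hne : u.toWord ≠ [] := mt FreeGroup.toWord_eq_nil_iff.1 hu.1
  obtain ⟨L₁, L₂, a, b, hL, hab⟩ := List.exists_append_cons_cons_snd_eq_not
    (fun h => hnotPos u hu.2.1 ⟨hne, h⟩)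
    (fun h => hnotPos _ hu.2.1.inv (PureNeg.purePos_inv ⟨hne, h⟩))
  obtain ⟨hv, hvw⟩ := hu.rotate (L₁ := L₁ ++ [a]) (L₂ := b :: L₂) (by simp [hL])
  obtain ⟨z, hz⟩ := hv.2.1
  refine ⟨z, _, hv.1, hv.psiReduced hz fun a' b' ha' hb' => ?_⟩
  rw [hvw, List.cons_append, List.head?_cons, Option.some_inj] at ha'
  rw [hvw, ← List.append_assoc, List.getLast?_concat, Option.some_inj] at hb'
  rw [← ha', ← hb', hab, Bool.not_not]
end

section
/- Let N ≥ 2, let φ be an A_N-positive primitive automorphism of the free group F_N, and let k ≥ 1 and a generator a be such that φ^k(a) = a * s for some pure positive word s (i.e. the reduced word of φ^k(a) is the letter a followed without cancellation by a nonempty positive word). Then for every n ≥ 0 the reduced word of φ^{kn}(a) is a proper prefix of the reduced word of φ^{k(n+1)}(a), the lengths |φ^{kn}(a)| tend to infinity, and the infinite word Y : ℕ → A_N defined by letting Y_i be the (positive) letter at position i of the reduced word of φ^{k(i+1)}(a) is not periodic: there is no integer q ≥ 1 such that Y_{i+q} = Y_i for all i ∈ ℕ. (One-sided formulation of Proposition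 1.2 of the paper: an A_N-positive primitive automorphism is not S-periodic.) -/
/-!
Write `u n` for the reduced word of `ψ^n(a)`, where `ψ = φ^k`. Since `ψ(a) = a * s` and positive
automorphisms never cancel, `u (n + 1) = u n * ψ^n(s)`, so the words `u n` grow and converge to the
infinite word `Y`. Positive automorphisms map prefixes of `Y` to prefixes of `Y`. If `Y` had a
period `q`, its prefix `w` of length `q` would satisfy `ψ(w)^q = w^Q` with `Q = |ψ(w)| > q`, as both
sides are the prefix of `Y` of length `qQ`. Applying `ψ⁻¹` repeatedly and taking total exponent sums
(which is the length on positive words) gives `Q^n ∣ q^n * |w|` for every `n`, hence `Q ∣ q`, which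
is absurd.
-/

namespace FreeGroup

variable {α β : Type*} [DecidableEq α] [DecidableEq β]

def IsPositiveWord (x : FreeGroup α) : Prop :=
  ∀ l ∈ x.toWord, l.2 = true

theorem toWord_mk_of_forall_snd {L : List (α × Bool)} (hL : ∀ l ∈ L, l.2 = true) :
    (mk L).toWord = L := by
  refine toWord_mk.trans (IsReduced.reduce_eq ?_)
  refine (List.pairwise_of_forall_mem_list fun l hl l' hl' _ => ?_).isChain
  rw [hL l hl, hL l' hl']

theorem isPositiveWord_mk {L : List (α × Bool)} (hL : ∀ l ∈ L, l.2 = true) :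
    IsPositiveWord (mk L) := by
  rwa [IsPositiveWord, toWord_mk_of_forall_snd hL]

theorem isPositiveWord_one : IsPositiveWord (1 : FreeGroup α) := by
  simp [IsPositiveWord]

theorem isPositiveWord_of (a : α) : IsPositiveWord (of a) := by
  simp [IsPositiveWord]

theorem toWord_mul_of_isPositiveWord {x y : FreeGroup α} (hx : IsPositiveWord x)
    (hy : IsPositiveWord y) : (x * y).toWord = x.toWord ++ y.toWord := by
  rw [← toWord_mk_of_forall_snd (L := x.toWord ++ y.toWord), ← mul_mk, mk_toWord, mk_toWord]
  exact fun l hl => (List.mem_append.1 hl).elim (hx l) (hy l)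

theorem IsPositiveWord.mul {x y : FreeGroup α} (hx : IsPositiveWord x) (hy : IsPositiveWord y) :
    IsPositiveWord (x * y) := by
  intro l hl
  rw [toWord_mul_of_isPositiveWord hx hy, List.mem_append] at hl
  exact hl.elim (hx l) (hy l)

theorem IsPositiveWord.pow {x : FreeGroup α} (hx : IsPositiveWord x) (m : ℕ) :
    IsPositiveWord (x ^ m) := by
  induction m with
  | zero => exact isPositiveWord_one
  | succ m ih => exact pow_succ x m ▸ ih.mul hx

theorem length_toWord_pow {x : FreeGroup α} (hx : IsPositiveWord x) (m : ℕ) :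
    (x ^ m).toWord.length = m * x.toWord.length := by
  induction m with
  | zero => simp
  | succ m ih =>
    rw [pow_succ, toWord_mul_of_isPositiveWord (hx.pow m) hx, List.length_append, ih, add_mul,
      one_mul]

@[elab_as_elim]
theorem IsPositiveWord.induction_on {motive : FreeGroup α → Prop} {x : FreeGroup α}
    (hx : IsPositiveWord x) (one : motive 1)
    (of_mul : ∀ b y, IsPositiveWord y → motive y → motive (of b * y)) : motive x := by
  obtain ⟨L, hL, rfl⟩ : ∃ L : List (α × Bool), (∀ l ∈ L, l.2 = true) ∧ mk L = x :=
    ⟨x.toWord, hx, mk_toWord⟩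
  induction L with
  | nil => exact one
  | cons l L ih =>
    obtain ⟨b, hb⟩ := l
    obtain rfl : hb = true := hL _ List.mem_cons_self
    have hL' : ∀ l ∈ L, l.2 = true := fun l hl => hL l (List.mem_cons_of_mem _ hl)
    have hmk : mk ((b, true) :: L) = of b * mk L := by rw [of, mul_mk]; rfl
    rw [hmk]
    exact of_mul b _ (isPositiveWord_mk hL') (ih hL' (isPositiveWord_mk hL'))

theorem toAdd_lift_of_isPositiveWord {x : FreeGroup α} (hx : IsPositiveWord x) :
    ((lift fun _ => Multiplicative.ofAdd (1 : ℤ)) x).toAdd = x.toWord.length := by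
  refine hx.induction_on (by simp) fun b y hy ih => ?_
  rw [_root_.map_mul, toAdd_mul, ih, toWord_mul_of_isPositiveWord (isPositiveWord_of b) hy]
  simp [add_comm]

section Map

variable {F : Type*} [FunLike F (FreeGroup α) (FreeGroup β)]
  [MonoidHomClass F (FreeGroup α) (FreeGroup β)] {f : F}

theorem IsPositiveWord.map (hf : ∀ a, IsPositiveWord (f (of a))) {x : FreeGroup α}
    (hx : IsPositiveWord x) : IsPositiveWord (f x) := by
  refine hx.induction_on ?_ fun b y _ ih => ?_
  · rw [_root_.map_one]; exact isPositiveWord_one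
  · rw [_root_.map_mul]; exact (hf b).mul ih

theorem length_toWord_le_map (hf : ∀ a, IsPositiveWord (f (of a)))
    (hf' : ∀ a, (f (of a)).toWord ≠ []) {x : FreeGroup α} (hx : IsPositiveWord x) :
    x.toWord.length ≤ (f x).toWord.length := by
  refine hx.induction_on (by simp) fun b y hy ih => ?_
  rw [_root_.map_mul, toWord_mul_of_isPositiveWord (isPositiveWord_of b) hy,
    toWord_mul_of_isPositiveWord (hf b) (hy.map hf), List.length_append, List.length_append,
    toWord_of, List.length_singleton]
  have := List.length_pos_iff.2 (hf' b)
  omega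

theorem toWord_map_prefix_of_prefix (hf : ∀ a, IsPositiveWord (f (of a))) {x z : FreeGroup α}
    (hz : IsPositiveWord z) (h : x.toWord <+: z.toWord) : (f x).toWord <+: (f z).toWord := by
  obtain ⟨r, hr⟩ := h
  have hr' : ∀ l ∈ r, l.2 = true := fun l hl => hz l (hr ▸ List.mem_append_right _ hl)
  have hx : IsPositiveWord x := fun l hl => hz l (hr ▸ List.mem_append_left _ hl)
  have hzx : z = x * mk r := toWord_injective <| by
    rw [toWord_mul_of_isPositiveWord hx (isPositiveWord_mk hr'), toWord_mk_of_forall_snd hr', hr]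
  rw [hzx, _root_.map_mul,
    toWord_mul_of_isPositiveWord (hx.map hf) ((isPositiveWord_mk hr').map hf)]
  exact List.prefix_append _ _

end Map

theorem toWord_pow_eq_take_of_periodic {Z : Stream' (α × Bool)} {q : ℕ}
    (hZ : Function.Periodic Z q) {w : FreeGroup α} (hw : IsPositiveWord w)
    (hwZ : w.toWord = Z.take q) (m : ℕ) : (w ^ m).toWord = Z.take (q * m) := by
  induction m with
  | zero => simp
  | succ m ih =>
    have hdrop : Z.drop (q * m) = Z := funext fun i => by
      simpa [Stream'.drop, Stream'.get, mul_comm] using hZ.nat_mul m i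
    rw [pow_succ, toWord_mul_of_isPositiveWord (hw.pow m) hw, ih, hwZ, mul_add_one,
      Stream'.take_add, hdrop]

end FreeGroup

theorem Nat.dvd_of_forall_pow_dvd_pow_mul {q Q c : ℕ} (hc : c ≠ 0)
    (h : ∀ n, Q ^ n ∣ q ^ n * c) : Q ∣ q := by
  rcases eq_or_ne q 0 with rfl | hq
  · exact dvd_zero Q
  have hQ : Q ≠ 0 := by
    rintro rfl
    simpa [hq, hc] using h 1
  rw [← Nat.factorization_le_iff_dvd hQ hq]
  intro p
  by_contra! hp
  have := (Nat.factorization_le_iff_dvd (pow_ne_zero _ hQ) (by positivity)).2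
    (h (c.factorization p + 1)) p
  simp only [Nat.factorization_pow, Nat.factorization_mul (pow_ne_zero _ hq) hc,
    Finsupp.add_apply, Finsupp.smul_apply, smul_eq_mul] at this
  nlinarith

namespace MulAut

variable {G : Type*} [Group G]

theorem pow_dvd_pow_mul_of_map_pow_eq_pow (ψ : MulAut G) (e : G →* Multiplicative ℤ) {q Q : ℕ}
    (n : ℕ) : ∀ w : G, ψ w ^ q = w ^ Q → (Q : ℤ) ^ n ∣ q ^ n * (e w).toAdd := by
  induction n with
  | zero => simp
  | succ n ih =>
    intro w hw
    -- `v = ψ⁻¹ w` satisfies the same relation as `w`, and `e v = (q / Q) * e w`.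
    set v := ψ⁻¹ w
    have hv : ψ v = w := by simp [v]
    have hvQ : w ^ q = v ^ Q := ψ.injective <| by rw [map_pow, map_pow, hv, hw]
    have hexp : (q : ℤ) * (e w).toAdd = Q * (e v).toAdd := by
      simpa using congrArg (fun g => (e g).toAdd) hvQ
    obtain ⟨c, hc⟩ := ih v (by rw [hv, hvQ])
    exact ⟨c, by linear_combination (q : ℤ) ^ n * hexp + (Q : ℤ) * hc⟩

theorem map_pow_ne_pow (ψ : MulAut G) (e : G →* Multiplicative ℤ) {w : G} (hw : e w ≠ 1)
    {q Q : ℕ} (hq : 0 < q) (hqQ : q < Q) : ψ w ^ q ≠ w ^ Q := by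
  intro h
  have hc : (e w).toAdd.natAbs ≠ 0 := by simpa using hw
  have hdvd : Q ∣ q := Nat.dvd_of_forall_pow_dvd_pow_mul hc fun n => by
    simpa [Int.natAbs_mul, Int.natAbs_pow] using
      Int.natAbs_dvd_natAbs.2 (pow_dvd_pow_mul_of_map_pow_eq_pow ψ e n w h)
  exact (Nat.le_of_dvd hq hdvd).not_gt hqQ

end MulAut

theorem List.eq_take_of_prefix_succ {β : Type*} {u : ℕ → List β} {Z : Stream' β}
    (hu : ∀ n, u n <+: u (n + 1)) (hZ : ∀ i, (u (i + 1))[i]? = some (Z i)) (n : ℕ) :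
    u n = Z.take (u n).length := by
  have hmono : ∀ {m n}, m ≤ n → u m <+: u n := fun hmn =>
    Nat.le_induction (List.prefix_refl _) (fun n _ ih => ih.trans (hu n)) _ hmn
  refine List.ext_getElem? fun i => ?_
  rcases lt_or_ge i (u n).length with hi | hi
  · have hi' : i < (u (i + 1)).length := (List.getElem?_eq_some_iff.1 (hZ i)).1
    obtain ⟨r, hr⟩ := hmono (le_max_left n (i + 1))
    obtain ⟨r', hr'⟩ := hmono (le_max_right n (i + 1))
    rw [Stream'.getElem?_take hi, Stream'.get, ← hZ i, ← List.getElem?_append_left (l₂ := r) hi, hr,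
      ← hr', List.getElem?_append_left hi']
  · rw [List.getElem?_eq_none hi, List.getElem?_eq_none (by simpa using hi)]

theorem Stream'.eq_take_length_of_prefix_take {β : Type*} {Z : Stream' β} {L : List β} {n : ℕ}
    (h : L <+: Z.take n) : L = Z.take L.length := by
  have hn : L.length ≤ n := by simpa using h.length_le
  conv_lhs => rw [List.prefix_iff_eq_take.1 h]
  rw [Stream'.take_take, min_eq_right hn]

open FreeGroup

theorem PurePos.isPositiveWord {N : ℕ} {s : FreeGroup (Fin N)} (hs : PurePos s) :
    IsPositiveWord s :=
  hs.2

namespace IsPositive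

variable {N : ℕ} {ψ : MulAut (FreeGroup (Fin N))}

theorem isPositiveWord_map_of (hψ : IsPositive ψ) (a : Fin N) : IsPositiveWord (ψ (of a)) :=
  (hψ a).2

theorem pow_s10 (hψ : IsPositive ψ) (n : ℕ) : IsPositive (ψ ^ n) := by
  induction n with
  | zero => simp [IsPositive, PurePos]
  | succ n ih =>
    intro a
    rw [pow_succ, MulAut.mul_apply]
    refine ⟨fun hnil => ?_, (hψ.isPositiveWord_map_of a).map ih.isPositiveWord_map_of⟩
    have := length_toWord_le_map ih.isPositiveWord_map_of (fun b => (ih b).1)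
      (hψ.isPositiveWord_map_of a)
    simp [hnil, (hψ a).1] at this

variable {a : Fin N} {s : FreeGroup (Fin N)}

theorem toWord_pow_succ_apply_of (hψ : IsPositive ψ) (hs : PurePos s)
    (h : (ψ (of a)).toWord = (a, true) :: s.toWord) (n : ℕ) :
    ((ψ ^ (n + 1)) (of a)).toWord = ((ψ ^ n) (of a)).toWord ++ ((ψ ^ n) s).toWord := by
  have hψa : ψ (of a) = of a * s := toWord_injective <| by
    rw [h, toWord_mul_of_isPositiveWord (isPositiveWord_of a) hs.isPositiveWord, toWord_of,
      List.singleton_append]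
  have hψn := (hψ.pow_s10 n).isPositiveWord_map_of
  rw [pow_succ, MulAut.mul_apply, hψa, _root_.map_mul,
    toWord_mul_of_isPositiveWord ((isPositiveWord_of a).map hψn) (hs.isPositiveWord.map hψn)]

theorem strictMono_length_toWord_pow_apply_of (hψ : IsPositive ψ) (hs : PurePos s)
    (h : (ψ (of a)).toWord = (a, true) :: s.toWord) :
    StrictMono fun n => ((ψ ^ n) (of a)).toWord.length := by
  refine strictMono_nat_of_lt_succ fun n => ?_
  rw [toWord_pow_succ_apply_of hψ hs h, List.length_append, Nat.lt_add_right_iff_pos]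
  exact (List.length_pos_iff.2 hs.1).trans_le <| length_toWord_le_map
    (hψ.pow_s10 n).isPositiveWord_map_of (fun b => (hψ.pow_s10 n b).1) hs.isPositiveWord

theorem length_toWord_lt_map_of_mul (hψ : IsPositive ψ) (hs : PurePos s)
    (h : (ψ (of a)).toWord = (a, true) :: s.toWord) {y : FreeGroup (Fin N)}
    (hy : IsPositiveWord y) : (of a * y).toWord.length < (ψ (of a * y)).toWord.length := by
  have hle := length_toWord_le_map hψ.isPositiveWord_map_of (fun b => (hψ b).1) hy
  have hs0 := List.length_pos_iff.2 hs.1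
  rw [_root_.map_mul, toWord_mul_of_isPositiveWord (isPositiveWord_of a) hy,
    toWord_mul_of_isPositiveWord (hψ.isPositiveWord_map_of a) (hy.map hψ.isPositiveWord_map_of),
    h, toWord_of]
  simp only [List.length_append, List.length_cons, List.length_nil]
  omega

variable {Z : Stream' (Fin N × Bool)}

theorem toWord_map_eq_take (hψ : IsPositive ψ) (hs : PurePos s)
    (h : (ψ (of a)).toWord = (a, true) :: s.toWord)
    (hZ : ∀ i, ((ψ ^ (i + 1)) (of a)).toWord[i]? = some (Z i)) {x : FreeGroup (Fin N)}
    (hx : x.toWord = Z.take x.toWord.length) :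
    (ψ x).toWord = Z.take (ψ x).toWord.length := by
  set t := x.toWord.length
  have hu := List.eq_take_of_prefix_succ
    (fun n => ⟨_, (toWord_pow_succ_apply_of hψ hs h n).symm⟩) hZ
  have ht : t ≤ ((ψ ^ t) (of a)).toWord.length :=
    (strictMono_length_toWord_pow_apply_of hψ hs h).id_le t
  have hpre : x.toWord <+: ((ψ ^ t) (of a)).toWord := by
    rw [hx, hu t]
    exact (Stream'.take_prefix _ _ _).2 ht
  have := toWord_map_prefix_of_prefix hψ.isPositiveWord_map_of
    ((hψ.pow_s10 t).isPositiveWord_map_of a) hpre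
  rw [← MulAut.mul_apply, ← pow_succ', hu (t + 1)] at this
  exact Stream'.eq_take_length_of_prefix_take this

theorem exists_toWord_of_mul_eq_take (hψ : IsPositive ψ)
    (h : (ψ (of a)).toWord = (a, true) :: s.toWord)
    (hZ : ∀ i, ((ψ ^ (i + 1)) (of a)).toWord[i]? = some (Z i)) (q : ℕ) :
    ∃ y, IsPositiveWord y ∧ (of a * y).toWord = Z.take (q + 1) := by
  have hZpos : ∀ i, (Z i).2 = true := fun i =>
    (hψ.pow_s10 (i + 1)).isPositiveWord_map_of a _ (List.mem_of_getElem? (hZ i))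
  have hZ0 : Z 0 = (a, true) := by simpa [h] using (hZ 0).symm
  have hL : ∀ l ∈ Z.tail.take q, l.2 = true := fun l hl => by
    obtain ⟨i, -, rfl⟩ := List.getElem_of_mem hl
    simp [Stream'.tail, Stream'.get, hZpos]
  refine ⟨mk (Z.tail.take q), isPositiveWord_mk hL, ?_⟩
  rw [toWord_mul_of_isPositiveWord (isPositiveWord_of a) (isPositiveWord_mk hL), toWord_of,
    toWord_mk_of_forall_snd hL, Stream'.take_succ, Stream'.head, Stream'.get, hZ0]
  rfl

theorem not_periodic_of_limit (hψ : IsPositive ψ) (hs : PurePos s)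
    (h : (ψ (of a)).toWord = (a, true) :: s.toWord)
    (hZ : ∀ i, ((ψ ^ (i + 1)) (of a)).toWord[i]? = some (Z i)) {q : ℕ} (hq : 0 < q) :
    ¬ Function.Periodic Z q := by
  intro hper
  obtain ⟨q, rfl⟩ : ∃ q', q = q' + 1 := ⟨q - 1, by omega⟩
  obtain ⟨y, hy, hwZ⟩ := exists_toWord_of_mul_eq_take hψ h hZ q
  set w := of a * y
  have hw : IsPositiveWord w := (isPositiveWord_of a).mul hy
  have hwpow := toWord_pow_eq_take_of_periodic hper hw hwZ
  have hQ := length_toWord_lt_map_of_mul hψ hs h hy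
  rw [hwZ, Stream'.length_take] at hQ
  refine MulAut.map_pow_ne_pow (w := w) ψ (lift fun _ => Multiplicative.ofAdd (1 : ℤ)) ?_ hq hQ
    (toWord_injective ?_)
  · rw [Ne, ← toAdd_eq_zero, toAdd_lift_of_isPositiveWord hw, hwZ, Stream'.length_take]
    omega
  · rw [hwpow, ← _root_.map_pow,
      toWord_map_eq_take hψ hs h hZ (by rw [hwpow, Stream'.length_take]), _root_.map_pow,
      length_toWord_pow (hw.map hψ.isPositiveWord_map_of)]

end IsPositive

theorem not_S_periodic_general {N : ℕ}
    (φ : MulAut (FreeGroup (Fin N))) (hpos : IsPositive φ)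
    (k : ℕ) (a : Fin N)
    (s : FreeGroup (Fin N)) (hs : PurePos s)
    (h : ((φ ^ k) (FreeGroup.of a)).toWord = (a, true) :: s.toWord) :
    (∀ n : ℕ,
      ((φ ^ (k * n)) (FreeGroup.of a)).toWord <+:
        ((φ ^ (k * (n + 1))) (FreeGroup.of a)).toWord ∧
      ((φ ^ (k * n)) (FreeGroup.of a)).toWord.length <
        ((φ ^ (k * (n + 1))) (FreeGroup.of a)).toWord.length) ∧
    Filter.Tendsto (fun n : ℕ => ((φ ^ (k * n)) (FreeGroup.of a)).toWord.length)
      Filter.atTop Filter.atTop ∧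
    ∀ Y : ℕ → Fin N,
      (∀ i : ℕ, ((φ ^ (k * (i + 1))) (FreeGroup.of a)).toWord[i]? = some (Y i, true)) →
      ¬ ∃ q : ℕ, 1 ≤ q ∧ ∀ i : ℕ, Y (i + q) = Y i := by
  have hψ := hpos.pow_s10 k
  have hmono := hψ.strictMono_length_toWord_pow_apply_of hs h
  simp only [pow_mul]
  refine ⟨fun n => ⟨⟨_, (hψ.toWord_pow_succ_apply_of hs h n).symm⟩, hmono n.lt_succ_self⟩,
    hmono.tendsto_atTop, ?_⟩
  rintro Y hY ⟨q, hq, hper⟩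
  exact hψ.not_periodic_of_limit hs h (Z := (·, true) ∘ Y) hY hq (Function.Periodic.comp hper _)

/-- One-sided form of the non-`S`-periodicity of an `A_N`-positive primitive
automorphism: if `φ^k(a) = a * s` with `s` pure positive and no cancellation, then
the reduced words of `φ^{kn}(a)` form a strictly increasing chain of prefixes whose
lengths tend to infinity, and the resulting infinite word `Y` (whose `i`-th letter
is the letter at position `i` of `φ^{k(i+1)}(a)`) is not periodic. -/
theorem not_S_periodic {N : ℕ} (hN : 2 ≤ N)
    (φ : MulAut (FreeGroup (Fin N))) (hpos : IsPositive φ) (hprim : IsPrimitive φ)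
    (k : ℕ) (hk : 1 ≤ k) (a : Fin N)
    (s : FreeGroup (Fin N)) (hs : PurePos s)
    (h : ((φ ^ k) (FreeGroup.of a)).toWord = (a, true) :: s.toWord) :
    (∀ n : ℕ,
      ((φ ^ (k * n)) (FreeGroup.of a)).toWord <+:
        ((φ ^ (k * (n + 1))) (FreeGroup.of a)).toWord ∧
      ((φ ^ (k * n)) (FreeGroup.of a)).toWord.length <
        ((φ ^ (k * (n + 1))) (FreeGroup.of a)).toWord.length) ∧
    Filter.Tendsto (fun n : ℕ => ((φ ^ (k * n)) (FreeGroup.of a)).toWord.length)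
      Filter.atTop Filter.atTop ∧
    ∀ Y : ℕ → Fin N,
      (∀ i : ℕ, ((φ ^ (k * (i + 1))) (FreeGroup.of a)).toWord[i]? = some (Y i, true)) →
      ¬ ∃ q : ℕ, 1 ≤ q ∧ ∀ i : ℕ, Y (i + q) = Y i :=
  not_S_periodic_general φ hpos k a s hs h
end
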